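/- Under the deterministic UCB1 setup, suppose that for every arm i the partial averages m ↦ (1/m) ∑_{u=1}^m x i u converge to a limit μ i as m → ∞, that there is a unique arm i* with μ* := μ i* = max_i μ i, and that the selection sequence obeys the UCB1 rule with constant C > 0. Then the running average of the collected rewards converges to the optimal mean: (1/n) ∑_{t=1}^n x (I t) (T (I t) t) → μ* as n → ∞. -/

import Mathlib

open Finset Filter

/-- Number of pulls of arm `i` among rounds `1, …, t`. -/
noncomputable def pullCount {K : ℕ} (I : ℕ → Fin K) (i : Fin K) (t : ℕ) : ℕ :=
  ((Finset.Icc 1 t).filter (fun s => I s = i)).card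

/-- Empirical mean of arm `i` after round `t` (equal to `0` when the arm was never pulled). -/
noncomputable def empMean {K : ℕ} (x : Fin K → ℕ → ℝ) (I : ℕ → Fin K) (i : Fin K) (t : ℕ) : ℝ :=
  if pullCount I i t = 0 then 0
  else (1 / (pullCount I i t : ℝ)) * ∑ u ∈ Finset.Icc 1 (pullCount I i t), x i u

/-- The selection sequence `I` obeys the UCB1 rule with constant `C`. -/
def UCB1Rule {K : ℕ} (x : Fin K → ℕ → ℝ) (I : ℕ → Fin K) (C : ℝ) : Prop :=
  ∀ t : ℕ, 1 ≤ t →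
    if ∃ i : Fin K, pullCount I i (t - 1) = 0 then pullCount I (I t) (t - 1) = 0
    else ∀ j : Fin K,
      empMean x I j (t - 1) + Real.sqrt (C * Real.log t / (pullCount I j (t - 1) : ℝ))
        ≤ empMean x I (I t) (t - 1)
            + Real.sqrt (C * Real.log t / (pullCount I (I t) (t - 1) : ℝ))


/-!
Every arm is pulled infinitely often: if arm `i` were pulled fewer than `M` times, its exploration
bonus `√(C log t / M)` would eventually exceed `4 B`, where `B` bounds all empirical means, and
then only arms pulled at most `4 M` times could ever be chosen again; but the pull counts sum to
`t`. Hence every empirical mean converges to its arm's mean. Once they are all within a quarter of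
the gap `Δ` to the best arm, a suboptimal arm is only pulled while its count is below
`4 C log t / Δ²`, so its share of the rounds tends to `0` and the best arm's share tends to `1`.
The average reward is the combination of the sample means of the arms weighted by these shares.
-/

theorem exists_forall_abs_le_of_tendsto {ι : Type*} [Finite ι] {u : ι → ℕ → ℝ} {a : ι → ℝ}
    (h : ∀ i, Tendsto (u i) atTop (nhds (a i))) : ∃ B, ∀ i m, |u i m| ≤ B := by
  obtain ⟨B, hB⟩ := (Bornology.isBounded_iUnion.2 fun i =>
    Metric.isBounded_range_of_tendsto _ (h i)).exists_norm_le
  exact ⟨B, fun i m => hB _ (Set.mem_iUnion.2 ⟨i, m, rfl⟩)⟩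

theorem monotone_log_natCast : Monotone fun n : ℕ => Real.log n := by
  intro m n h
  rcases m.eq_zero_or_pos with rfl | hm
  · simpa using Real.log_natCast_nonneg n
  · exact Real.log_le_log (by positivity) (by exact_mod_cast h)

theorem tendsto_sum_mul_of_tendsto_weight_zero {ι α : Type*} [Fintype ι] {l : Filter α}
    {w a : ι → α → ℝ} {μ : ι → ℝ} {i₀ : ι} (hw : ∀ᶠ n in l, ∑ i, w i n = 1)
    (hw0 : ∀ i, i ≠ i₀ → Tendsto (w i) l (nhds 0)) (ha : ∀ i, Tendsto (a i) l (nhds (μ i))) :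
    Tendsto (fun n => ∑ i, w i n * a i n) l (nhds (μ i₀)) := by
  classical
  have hw₀ : Tendsto (w i₀) l (nhds 1) := by
    have hrest : Tendsto (fun n => ∑ i ∈ Finset.univ.erase i₀, w i n) l (nhds 0) := by
      simpa only [Finset.sum_const_zero] using
        tendsto_finsetSum _ fun i hi => hw0 i (Finset.ne_of_mem_erase hi)
    have hdiff := (tendsto_const_nhds (x := (1 : ℝ))).sub hrest
    rw [sub_zero] at hdiff
    refine hdiff.congr' ?_
    filter_upwards [hw] with n hn
    rw [← hn, ← Finset.add_sum_erase _ _ (Finset.mem_univ i₀), add_sub_cancel_right]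
  have hterm : ∀ i, Tendsto (fun n => w i n * a i n) l (nhds (if i = i₀ then μ i₀ else 0)) := by
    intro i
    split_ifs with h
    · subst h; simpa using hw₀.mul (ha i)
    · simpa using (hw0 i h).mul (ha i)
  simpa using tendsto_finsetSum Finset.univ fun i _ => hterm i

noncomputable def sampleMean (y : ℕ → ℝ) (m : ℕ) : ℝ :=
  (1 / (m : ℝ)) * ∑ u ∈ Finset.Icc 1 m, y u

theorem natCast_mul_sampleMean (y : ℕ → ℝ) (m : ℕ) :
    m * sampleMean y m = ∑ u ∈ Finset.Icc 1 m, y u := by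
  rcases m.eq_zero_or_pos with rfl | hm
  · simp
  · rw [sampleMean, ← mul_assoc, mul_one_div_cancel (by positivity), one_mul]

section PullCount

variable {K : ℕ} (I : ℕ → Fin K)

theorem pullCount_succ (i : Fin K) (t : ℕ) :
    pullCount I i (t + 1) = pullCount I i t + if I (t + 1) = i then 1 else 0 := by
  simp only [pullCount, Finset.card_filter]
  exact Finset.sum_Icc_succ_top (by omega) _

theorem pullCount_mono (i : Fin K) : Monotone (pullCount I i) := fun _ _ h =>
  Finset.card_le_card (Finset.filter_subset_filter _ (Finset.Icc_subset_Icc_right h))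

theorem pullCount_le_self (i : Fin K) (t : ℕ) : pullCount I i t ≤ t :=
  (Finset.card_filter_le _ _).trans (by simp)

theorem sum_pullCount (t : ℕ) : ∑ i, pullCount I i t = t := by
  unfold pullCount
  simpa using (Finset.card_eq_sum_card_fiberwise (f := I) (s := Finset.Icc 1 t)
    (t := Finset.univ) (fun _ _ => Finset.mem_coe.2 (Finset.mem_univ _))).symm

theorem not_forall_pullCount_le (c : ℝ) : ¬ ∀ i t, (pullCount I i t : ℝ) ≤ c := by
  intro h
  obtain ⟨t, ht⟩ := exists_nat_gt (K * c)
  have : (t : ℝ) ≤ K * c :=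
    calc (t : ℝ) = ∑ i, (pullCount I i t : ℝ) := by exact_mod_cast (sum_pullCount I t).symm
      _ ≤ ∑ _i : Fin K, c := Finset.sum_le_sum fun i _ => h i t
      _ = K * c := by simp
  linarith

theorem pullCount_le_add_of_forall_pull_le {i : Fin K} {f : ℕ → ℝ} (hf : Monotone f)
    (hf0 : 0 ≤ f 0) {N : ℕ}
    (h : ∀ t, N ≤ t → I (t + 1) = i → (pullCount I i t : ℝ) ≤ f (t + 1)) (n : ℕ) :
    (pullCount I i n : ℝ) ≤ N + f n + 1 := by
  induction n with
  | zero =>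
    rw [show pullCount I i 0 = 0 by simp [pullCount], Nat.cast_zero]
    positivity
  | succ n ih =>
    rw [pullCount_succ]
    split_ifs with hn
    · rcases le_or_gt N n with hNn | hnN
      · push_cast
        linarith [h n hNn hn, (N.cast_nonneg : (0 : ℝ) ≤ N)]
      · have : (pullCount I i n : ℝ) + 1 ≤ N := by
          exact_mod_cast (pullCount_le_self I i n).trans_lt hnN
        push_cast
        linarith [hf0.trans (hf (Nat.zero_le (n + 1)))]
    · simpa using ih.trans (by linarith [hf n.le_succ])

theorem sum_reward_eq_sum_sum (x : Fin K → ℕ → ℝ) (n : ℕ) :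
    ∑ t ∈ Finset.Icc 1 n, x (I t) (pullCount I (I t) t)
      = ∑ i, ∑ u ∈ Finset.Icc 1 (pullCount I i n), x i u := by
  induction n with
  | zero => simp [pullCount]
  | succ n ih =>
    have hstep : ∀ i, ∑ u ∈ Finset.Icc 1 (pullCount I i (n + 1)), x i u
        = ∑ u ∈ Finset.Icc 1 (pullCount I i n), x i u
          + if I (n + 1) = i then x i (pullCount I i (n + 1)) else 0 := by
      intro i
      rw [pullCount_succ]
      split_ifs
      · exact Finset.sum_Icc_succ_top (by omega) _
      · simp
    simp only [Finset.sum_Icc_succ_top (by omega : 1 ≤ n + 1), ih, hstep, Finset.sum_add_distrib,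
      Finset.sum_ite_eq, Finset.mem_univ, if_true]

end PullCount

section UCB1

variable {K : ℕ} {x : Fin K → ℕ → ℝ} {I : ℕ → Fin K} {C : ℝ}

theorem empMean_eq_sampleMean (i : Fin K) (t : ℕ) :
    empMean x I i t = sampleMean (x i) (pullCount I i t) := by
  unfold empMean sampleMean
  split_ifs with h <;> simp [h]

/-- The index that UCB1 maximises at round `t + 1`. -/
noncomputable def ucbIndex (x : Fin K → ℕ → ℝ) (I : ℕ → Fin K) (C : ℝ) (i : Fin K) (t : ℕ) :
    ℝ :=
  empMean x I i t + √(C * Real.log (t + 1) / pullCount I i t)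

theorem UCB1Rule.pullCount_eq_zero (hUCB : UCB1Rule x I C) {t : ℕ}
    (h : ∃ i, pullCount I i t = 0) : pullCount I (I (t + 1)) t = 0 := by
  simpa [h] using hUCB (t + 1) (by omega)

theorem UCB1Rule.ucbIndex_le (hUCB : UCB1Rule x I C) {t : ℕ} (h : ∀ i, pullCount I i t ≠ 0)
    (j : Fin K) : ucbIndex x I C j t ≤ ucbIndex x I C (I (t + 1)) t := by
  have := hUCB (t + 1) (by omega)
  rw [if_neg (by simpa using h)] at this
  simpa [ucbIndex] using this j

theorem UCB1Rule.exists_pullCount_ne_zero (hUCB : UCB1Rule x I C) (i : Fin K) :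
    ∃ t, pullCount I i t ≠ 0 := by
  by_contra! h
  refine not_forall_pullCount_le I 1 fun j t => ?_
  simpa using pullCount_le_add_of_forall_pull_le I (i := j) (f := 0) monotone_const le_rfl (N := 0)
    (fun t _ hj => by simp [← hj, hUCB.pullCount_eq_zero ⟨i, h t⟩]) t

theorem UCB1Rule.eventually_pullCount_ne_zero (hUCB : UCB1Rule x I C) :
    ∀ᶠ t in atTop, ∀ i, pullCount I i t ≠ 0 := by
  refine eventually_all.2 fun i => ?_
  obtain ⟨t₀, ht₀⟩ := hUCB.exists_pullCount_ne_zero i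
  filter_upwards [eventually_ge_atTop t₀] with t ht
  exact (Nat.pos_of_ne_zero ht₀).trans_le (pullCount_mono I i ht) |>.ne'

theorem UCB1Rule.pullCount_le_of_bonus_gt (hUCB : UCB1Rule x I C) (hC : 0 < C) {B : ℝ}
    (hB : ∀ i t, |empMean x I i t| ≤ B) {i : Fin K} {t : ℕ} {M : ℝ}
    (hpos : ∀ j, pullCount I j t ≠ 0) (hM : (pullCount I i t : ℝ) ≤ M)
    (hbonus : 4 * B < √(C * Real.log (t + 1) / M)) :
    (pullCount I (I (t + 1)) t : ℝ) ≤ 4 * M := by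
  set L := C * Real.log (t + 1)
  set s := √(L / M)
  have hL : 0 ≤ L := mul_nonneg hC.le (Real.log_nonneg (by simp))
  have hi : (0 : ℝ) < pullCount I i t := by exact_mod_cast Nat.pos_of_ne_zero (hpos i)
  by_contra! hj
  have hbonus_i : s ≤ √(L / pullCount I i t) :=
    Real.sqrt_le_sqrt (div_le_div_of_nonneg_left hL hi hM)
  -- with `hbonus_i`, the pulled arm's index falls short of arm `i`'s by `s / 2 - 2 B > 0`
  have hbonus_j : √(L / pullCount I (I (t + 1)) t) ≤ s / 2 :=
    calc √(L / pullCount I (I (t + 1)) t) ≤ √(L / (4 * M)) :=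
          Real.sqrt_le_sqrt (div_le_div_of_nonneg_left hL (by linarith) hj.le)
      _ = s / 2 := by
          rw [show L / (4 * M) = L / M / 2 ^ 2 by ring, Real.sqrt_div' _ (by positivity),
            Real.sqrt_sq zero_le_two]
  have hindex := hUCB.ucbIndex_le hpos i
  unfold ucbIndex at hindex
  linarith [abs_le.1 (hB i t), abs_le.1 (hB (I (t + 1)) t)]

theorem UCB1Rule.tendsto_pullCount_atTop (hUCB : UCB1Rule x I C) (hC : 0 < C)
    {μ : Fin K → ℝ} (hconv : ∀ i, Tendsto (sampleMean (x i)) atTop (nhds (μ i))) (i : Fin K) :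
    Tendsto (pullCount I i) atTop atTop := by
  obtain ⟨B, hB⟩ := exists_forall_abs_le_of_tendsto hconv
  replace hB : ∀ i t, |empMean x I i t| ≤ B := fun i t => empMean_eq_sampleMean i t ▸ hB _ _
  refine tendsto_atTop_atTop_of_monotone (pullCount_mono I i) fun M => ?_
  by_contra! hM
  have hM0 : (0 : ℝ) < M := by exact_mod_cast (Nat.zero_le _).trans_lt (hM 0)
  have hlog : Tendsto (fun t : ℕ => C * Real.log (t + 1) / M) atTop atTop :=
    ((Real.tendsto_log_atTop.comp (tendsto_atTop_add_const_right _ 1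
      tendsto_natCast_atTop_atTop)).const_mul_atTop hC).atTop_div_const hM0
  obtain ⟨N, hN⟩ := eventually_atTop.1
    ((hlog.eventually_gt_atTop ((4 * B) ^ 2)).and hUCB.eventually_pullCount_ne_zero)
  refine not_forall_pullCount_le I (N + 4 * M + 1) fun j t => ?_
  refine pullCount_le_add_of_forall_pull_le I (f := fun _ => 4 * M) monotone_const
    (by positivity) (fun t ht hj => hj ▸ ?_) t
  exact hUCB.pullCount_le_of_bonus_gt hC hB (hN t ht).2 (by exact_mod_cast (hM t).le)
    (Real.lt_sqrt_of_sq_lt (hN t ht).1)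

theorem UCB1Rule.tendsto_empMean (hUCB : UCB1Rule x I C) (hC : 0 < C) {μ : Fin K → ℝ}
    (hconv : ∀ i, Tendsto (sampleMean (x i)) atTop (nhds (μ i))) (i : Fin K) :
    Tendsto (empMean x I i) atTop (nhds (μ i)) :=
  ((hconv i).comp (hUCB.tendsto_pullCount_atTop hC hconv i)).congr fun t =>
    (empMean_eq_sampleMean i t).symm

theorem UCB1Rule.pullCount_le_of_empMean_add_le (hUCB : UCB1Rule x I C) {i j : Fin K} {t : ℕ}
    {δ : ℝ} (hδ : 0 < δ) (hpos : ∀ k, pullCount I k t ≠ 0)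
    (hgap : empMean x I i t + δ ≤ empMean x I j t) (hi : I (t + 1) = i) :
    (pullCount I i t : ℝ) ≤ C / δ ^ 2 * Real.log (t + 1) := by
  have hindex := hUCB.ucbIndex_le hpos j
  rw [hi] at hindex
  unfold ucbIndex at hindex
  have hbonus : δ ≤ √(C * Real.log (t + 1) / pullCount I i t) := by
    linarith [Real.sqrt_nonneg (C * Real.log (t + 1) / pullCount I j t)]
  have hi0 : (0 : ℝ) < pullCount I i t := by exact_mod_cast Nat.pos_of_ne_zero (hpos i)
  rw [Real.le_sqrt' hδ, le_div_iff₀ hi0] at hbonus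
  rw [div_mul_eq_mul_div, le_div_iff₀ (by positivity)]
  linarith

theorem UCB1Rule.tendsto_pullCount_div_zero (hUCB : UCB1Rule x I C) (hC : 0 < C)
    {μ : Fin K → ℝ} (hconv : ∀ i, Tendsto (sampleMean (x i)) atTop (nhds (μ i)))
    {i j : Fin K} (hij : μ i < μ j) :
    Tendsto (fun n : ℕ => (pullCount I i n : ℝ) / n) atTop (nhds 0) := by
  set δ := (μ j - μ i) / 2 with hδ_def
  have hδ : 0 < δ := by linarith
  obtain ⟨N, hN⟩ := eventually_atTop.1
    (((hUCB.tendsto_empMean hC hconv i).eventually_lt_const (by linarith : μ i < μ i + δ / 2)).and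
      (((hUCB.tendsto_empMean hC hconv j).eventually_const_lt (by linarith : μ j - δ / 2 < μ j)).and
        hUCB.eventually_pullCount_ne_zero))
  set c := C / δ ^ 2
  have hbound := pullCount_le_add_of_forall_pull_le I (i := i) (f := fun n => c * Real.log n)
    (N := N) (fun m n h => mul_le_mul_of_nonneg_left (monotone_log_natCast h) (by positivity))
    (by simp) fun t ht hi => by
      simpa using hUCB.pullCount_le_of_empMean_add_le (j := j) hδ (hN t ht).2.2
        (by linarith [(hN t ht).1, (hN t ht).2.1]) hi
  have hlim : Tendsto (fun n : ℕ => (N + 1 : ℝ) / n + c * (Real.log n / n)) atTop (nhds 0) := by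
    simpa using (tendsto_const_div_atTop_nhds_zero_nat (N + 1 : ℝ)).add
      ((Real.isLittleO_log_id_atTop.tendsto_div_nhds_zero.comp
        tendsto_natCast_atTop_atTop).const_mul c)
  refine squeeze_zero (fun n => by positivity) (fun n => ?_) hlim
  rw [show (N + 1 : ℝ) / n + c * (Real.log n / n) = (N + c * Real.log n + 1) / n by ring]
  exact div_le_div_of_nonneg_right (hbound n) n.cast_nonneg

end UCB1

theorem ucb1_average_reward_tendsto_optimal_mean_general
    {K : ℕ} (x : Fin K → ℕ → ℝ) (I : ℕ → Fin K)
    (μ : Fin K → ℝ)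
    (hconv : ∀ i : Fin K,
      Tendsto (fun m : ℕ => (1 / (m : ℝ)) * ∑ u ∈ Finset.Icc 1 m, x i u) atTop (nhds (μ i)))
    (istar : Fin K)
    (huniq : ∀ i : Fin K, i ≠ istar → μ i < μ istar)
    (C : ℝ) (hC : 0 < C)
    (hUCB : UCB1Rule x I C) :
    Tendsto (fun n : ℕ => (1 / (n : ℝ)) * ∑ t ∈ Finset.Icc 1 n, x (I t) (pullCount I (I t) t))
      atTop (nhds (μ istar)) := by
  have hshares : ∀ᶠ n : ℕ in atTop, ∑ i, (pullCount I i n : ℝ) / n = 1 := by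
    filter_upwards [eventually_gt_atTop 0] with n hn
    rw [← Finset.sum_div, div_eq_one_iff_eq (by positivity)]
    exact_mod_cast sum_pullCount I n
  have hlim := tendsto_sum_mul_of_tendsto_weight_zero hshares
    (a := fun i n => sampleMean (x i) (pullCount I i n))
    (fun i hi => hUCB.tendsto_pullCount_div_zero hC hconv (huniq i hi))
    (fun i => (hconv i).comp (hUCB.tendsto_pullCount_atTop hC hconv i))
  refine hlim.congr fun n => ?_
  rw [sum_reward_eq_sum_sum, Finset.mul_sum]
  refine Finset.sum_congr rfl fun i _ => ?_
  rw [← natCast_mul_sampleMean]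
  ring

theorem ucb1_average_reward_tendsto_optimal_mean
    {K : ℕ} (hK : 2 ≤ K) (x : Fin K → ℕ → ℝ) (I : ℕ → Fin K)
    (μ : Fin K → ℝ)
    (hconv : ∀ i : Fin K,
      Tendsto (fun m : ℕ => (1 / (m : ℝ)) * ∑ u ∈ Finset.Icc 1 m, x i u) atTop (nhds (μ i)))
    (istar : Fin K)
    (huniq : ∀ i : Fin K, i ≠ istar → μ i < μ istar)
    (C : ℝ) (hC : 0 < C)
    (hUCB : UCB1Rule x I C) :
    Tendsto (fun n : ℕ => (1 / (n : ℝ)) * ∑ t ∈ Finset.Icc 1 n, x (I t) (pullCount I (I t) t))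
      atTop (nhds (μ istar)) :=
  ucb1_average_reward_tendsto_optimal_mean_general x I μ hconv istar huniq C hC hUCB
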